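/- arXiv:1707.00535 — 8 statements merged into one kernel-verified Lean document; each statement's English description precedes it below -/
import Mathlib

section
/- Let A be an n×n real matrix. The following are equivalent: (i) A is diagonally equivalent to a symmetric matrix; (ii) for every pair (D₁, D₂) of diagonal matrices with strictly positive diagonal entries, D₁ A D₂ is diagonally equivalent to a symmetric matrix; (iii) there exist diagonal matrices D₁, D₂ with strictly positive diagonal entries such that D₁ A D₂ is diagonally equivalent to a symmetric matrix. -/
/-!
`A` is diagonally equivalent to a symmetric matrix iff `w i * A i j = w j * A j i` for some
positive weights `w`: conjugating by `diagonal d` gives the weights `d i ^ 2`, and conversely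
one conjugates by `diagonal (√w)`. If `w` symmetrizes `A`, then `w i * b i / a i` symmetrizes
`diagonal a * A * diagonal b`, and `w i * a i / b i` undoes this, so for positive diagonal scalings
on both sides the property holds for `D₁ * A * D₂` exactly when it holds for `A`.
-/

open Matrix

/-- `A` is diagonally equivalent to a symmetric matrix. -/
def IsDiagEquivSymm {n : ℕ} (A : Matrix (Fin n) (Fin n) ℝ) : Prop :=
  ∃ D : Matrix (Fin n) (Fin n) ℝ, D.IsDiag ∧ (∀ i, D i i ≠ 0) ∧ (D * A * D⁻¹).IsSymm

namespace Matrix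

variable {ι K : Type*} [Fintype ι] [DecidableEq ι]

theorem inv_diagonal_of_ne_zero [Field K] {d : ι → K} (hd : ∀ i, d i ≠ 0) :
    (diagonal d)⁻¹ = diagonal fun i => (d i)⁻¹ := by
  refine inv_eq_right_inv ?_
  rw [diagonal_mul_diagonal, ← diagonal_one]
  exact congrArg diagonal (funext fun i => mul_inv_cancel₀ (hd i))

theorem isSymm_diagonal_mul_mul_inv_iff [Field K] {d : ι → K} (hd : ∀ i, d i ≠ 0)
    (A : Matrix ι ι K) :
    (diagonal d * A * (diagonal d)⁻¹).IsSymm ↔ ∀ i j, d i ^ 2 * A i j = d j ^ 2 * A j i := by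
  simp only [IsSymm.ext_iff, inv_diagonal_of_ne_zero hd, mul_diagonal, diagonal_mul]
  refine forall₂_congr fun i j => ?_
  have hdi := hd i
  have hdj := hd j
  field_simp
  exact eq_comm

/-- The entrywise form of `(diagonal w * A).IsSymm` for a positive weight vector `w`. -/
def IsSymmetrizable (A : Matrix ι ι ℝ) : Prop :=
  ∃ w : ι → ℝ, (∀ i, 0 < w i) ∧ ∀ i j, w i * A i j = w j * A j i

theorem isSymmetrizable_iff_exists_isSymm_diagonal_mul_mul_inv (A : Matrix ι ι ℝ) :
    A.IsSymmetrizable ↔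
      ∃ d : ι → ℝ, (∀ i, d i ≠ 0) ∧ (diagonal d * A * (diagonal d)⁻¹).IsSymm := by
  constructor
  · rintro ⟨w, hw, hA⟩
    have hsqrt : ∀ i, √(w i) ≠ 0 := fun i => (Real.sqrt_pos.2 (hw i)).ne'
    refine ⟨fun i => √(w i), hsqrt, (isSymm_diagonal_mul_mul_inv_iff hsqrt A).2 ?_⟩
    simpa only [Real.sq_sqrt (hw _).le] using hA
  · rintro ⟨d, hd, hA⟩
    exact ⟨fun i => d i ^ 2, fun i => sq_pos_of_ne_zero (hd i),
      (isSymm_diagonal_mul_mul_inv_iff hd A).1 hA⟩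

theorem isSymmetrizable_diagonal_mul_mul_diagonal_iff {A : Matrix ι ι ℝ} {a b : ι → ℝ}
    (ha : ∀ i, 0 < a i) (hb : ∀ i, 0 < b i) :
    (diagonal a * A * diagonal b).IsSymmetrizable ↔ A.IsSymmetrizable := by
  simp only [IsSymmetrizable, mul_diagonal, diagonal_mul]
  constructor
  · rintro ⟨w, hw, hA⟩
    refine ⟨fun i => w i * a i / b i, fun i => div_pos (mul_pos (hw i) (ha i)) (hb i),
      fun i j => ?_⟩
    have hbi := (hb i).ne'
    have hbj := (hb j).ne'
    field_simp
    linear_combination hA i j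
  · rintro ⟨w, hw, hA⟩
    refine ⟨fun i => w i * b i / a i, fun i => div_pos (mul_pos (hw i) (hb i)) (ha i),
      fun i j => ?_⟩
    have hai := (ha i).ne'
    have haj := (ha j).ne'
    field_simp
    linear_combination (b i * b j) * hA i j

end Matrix

theorem isDiagEquivSymm_iff_isSymmetrizable {n : ℕ} (A : Matrix (Fin n) (Fin n) ℝ) :
    IsDiagEquivSymm A ↔ A.IsSymmetrizable := by
  rw [isSymmetrizable_iff_exists_isSymm_diagonal_mul_mul_inv]
  constructor
  · rintro ⟨D, hD, hne, hA⟩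
    exact ⟨D.diag, hne, by rwa [hD.diagonal_diag]⟩
  · rintro ⟨d, hd, hA⟩
    exact ⟨diagonal d, isDiag_diagonal d, by simpa using hd, hA⟩

theorem isDiagEquivSymm_mul_mul_iff {n : ℕ} {A D₁ D₂ : Matrix (Fin n) (Fin n) ℝ}
    (h₁ : D₁.IsDiag) (h₂ : D₂.IsDiag) (p₁ : ∀ i, 0 < D₁ i i) (p₂ : ∀ i, 0 < D₂ i i) :
    IsDiagEquivSymm (D₁ * A * D₂) ↔ IsDiagEquivSymm A := by
  rw [← h₁.diagonal_diag, ← h₂.diagonal_diag, isDiagEquivSymm_iff_isSymmetrizable,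
    isDiagEquivSymm_iff_isSymmetrizable]
  exact isSymmetrizable_diagonal_mul_mul_diagonal_iff p₁ p₂

/-- Symmetrizability by diagonal conjugation is stable under pre/post
multiplication by positive diagonal matrices (Lemma 2.3). -/
theorem stmt_3 {n : ℕ} (A : Matrix (Fin n) (Fin n) ℝ) :
    (IsDiagEquivSymm A ↔
      ∀ D₁ D₂ : Matrix (Fin n) (Fin n) ℝ, D₁.IsDiag → D₂.IsDiag →
        (∀ i, 0 < D₁ i i) → (∀ i, 0 < D₂ i i) → IsDiagEquivSymm (D₁ * A * D₂)) ∧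
    (IsDiagEquivSymm A ↔
      ∃ D₁ D₂ : Matrix (Fin n) (Fin n) ℝ, D₁.IsDiag ∧ D₂.IsDiag ∧
        (∀ i, 0 < D₁ i i) ∧ (∀ i, 0 < D₂ i i) ∧ IsDiagEquivSymm (D₁ * A * D₂)) := by
  have one_pos : ∀ i, (0 : ℝ) < (1 : Matrix (Fin n) (Fin n) ℝ) i i := fun i => by simp
  have unscaled : IsDiagEquivSymm (1 * A * 1) ↔ IsDiagEquivSymm A :=
    isDiagEquivSymm_mul_mul_iff isDiag_one isDiag_one one_pos one_pos
  refine ⟨⟨fun h D₁ D₂ h₁ h₂ p₁ p₂ => (isDiagEquivSymm_mul_mul_iff h₁ h₂ p₁ p₂).2 h,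
      fun h => unscaled.1 (h 1 1 isDiag_one isDiag_one one_pos one_pos)⟩,
    ⟨fun h => ⟨1, 1, isDiag_one, isDiag_one, one_pos, one_pos, unscaled.2 h⟩, ?_⟩⟩
  rintro ⟨D₁, D₂, h₁, h₂, p₁, p₂, h⟩
  exact (isDiagEquivSymm_mul_mul_iff h₁ h₂ p₁ p₂).1 h
end

section
/- A 3×3 real matrix K with all entries strictly positive is diagonally equivalent to a symmetric matrix if and only if K(1,2)K(2,3)K(3,1) = K(2,1)K(1,3)K(3,2). -/
/-! Conjugating by `diagonal v` makes `K` symmetric exactly when the weights `w i = v i ^ 2`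
satisfy detailed balance `w i * K i j = w j * K j i`. Detailed balance forces every
3-cycle product of `K` to equal the reversed one. Conversely, if this holds for all triangles
through a base point `i₀`, then `w i = K i₀ i / K i i₀` is balanced, and for positive
`K` these weights are positive, hence squares. For `3 × 3` matrices the cycle `0 → 1 → 2 → 0`
is, up to reversal, the only nondegenerate triangle through `0`. -/

open Matrix

section Balance

variable {n 𝕜 : Type*} [Fintype n] [DecidableEq n] [Field 𝕜]

lemma Matrix.inv_diagonal_of_ne_zero_s4 {v : n → 𝕜} (hv : ∀ i, v i ≠ 0) :
    (diagonal v)⁻¹ = diagonal v⁻¹ :=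
  inv_eq_right_inv <| by
    rw [diagonal_mul_diagonal, ← diagonal_one]
    exact congrArg diagonal (funext fun i => mul_inv_cancel₀ (hv i))

lemma Matrix.diagonal_mul_mul_inv_diagonal_apply (K : Matrix n n 𝕜) {v : n → 𝕜}
    (hv : ∀ i, v i ≠ 0) (i j : n) :
    (diagonal v * K * (diagonal v)⁻¹) i j = v i * K i j / v j := by
  rw [inv_diagonal_of_ne_zero_s4 hv, mul_diagonal, diagonal_mul, Pi.inv_apply, div_eq_mul_inv]

lemma Matrix.isSymm_diagonal_mul_mul_inv_diagonal_iff (K : Matrix n n 𝕜) {v : n → 𝕜}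
    (hv : ∀ i, v i ≠ 0) :
    (diagonal v * K * (diagonal v)⁻¹).IsSymm ↔ ∀ i j, v i ^ 2 * K i j = v j ^ 2 * K j i := by
  simp only [IsSymm.ext_iff, diagonal_mul_mul_inv_diagonal_apply K hv,
    div_eq_div_iff (hv _) (hv _)]
  exact forall_congr' fun i => forall_congr' fun j => by
    constructor <;> intro h <;> linear_combination -h

lemma Matrix.exists_diagonal_conj_isSymm_iff (K : Matrix n n 𝕜) :
    (∃ D : Matrix n n 𝕜, D.IsDiag ∧ (∀ i, D i i ≠ 0) ∧ (D * K * D⁻¹).IsSymm) ↔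
      ∃ v : n → 𝕜, (∀ i, v i ≠ 0) ∧ ∀ i j, v i ^ 2 * K i j = v j ^ 2 * K j i := by
  constructor
  · rintro ⟨D, hdiag, hD, hsymm⟩
    rw [← hdiag.diagonal_diag,
      isSymm_diagonal_mul_mul_inv_diagonal_iff K (v := D.diag) hD] at hsymm
    exact ⟨D.diag, hD, hsymm⟩
  · rintro ⟨v, hv, hbal⟩
    exact ⟨diagonal v, isDiag_diagonal v, by simpa using hv,
      (isSymm_diagonal_mul_mul_inv_diagonal_iff K hv).2 hbal⟩

end Balance

lemma Matrix.cycle_eq_of_balanced {n R : Type*} [CommRing R] [IsDomain R] {K : Matrix n n R}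
    {w : n → R} (hw : ∀ i, w i ≠ 0) (hbal : ∀ i j, w i * K i j = w j * K j i) (i j k : n) :
    K i j * K j k * K k i = K j i * K i k * K k j := by
  have hprod : w i * w j * w k * (K i j * K j k * K k i) =
      w i * w j * w k * (K j i * K i k * K k j) := by
    linear_combination (w j * K j k * (w k * K k i)) * hbal i j +
      (w j * K j i * (w k * K k i)) * hbal j k + (w j * K j i * (w k * K k j)) * hbal k i
  exact mul_left_cancel₀ (mul_ne_zero (mul_ne_zero (hw i) (hw j)) (hw k)) hprod

lemma Matrix.balanced_of_cycle_eq {n 𝕜 : Type*} [Field 𝕜] {K : Matrix n n 𝕜} (i₀ : n)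
    (hK : ∀ i, K i i₀ ≠ 0)
    (hcycle : ∀ i j, K i₀ i * K i j * K j i₀ = K i₀ j * K j i * K i i₀) (i j : n) :
    K i₀ i / K i i₀ * K i j = K i₀ j / K j i₀ * K j i := by
  rw [div_mul_eq_mul_div, div_mul_eq_mul_div, div_eq_div_iff (hK i) (hK j)]
  linear_combination hcycle i j

lemma Matrix.fin_three_cycle_eq {α : Type*} [CommRing α] {K : Matrix (Fin 3) (Fin 3) α}
    (h : K 0 1 * K 1 2 * K 2 0 = K 1 0 * K 0 2 * K 2 1) (i j : Fin 3) :
    K 0 i * K i j * K j 0 = K 0 j * K j i * K i 0 := by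
  fin_cases i <;> fin_cases j <;> simp only [Fin.zero_eta, Fin.mk_one, Fin.reduceFinMk] <;>
    first | ring | linear_combination h | linear_combination -h

/-- A `3 × 3` matrix with strictly positive entries is diagonally equivalent to a
symmetric matrix iff `K(1,2)K(2,3)K(3,1) = K(2,1)K(1,3)K(3,2)`. -/
theorem stmt_4 (K : Matrix (Fin 3) (Fin 3) ℝ) (hK : ∀ i j, 0 < K i j) :
    (∃ D : Matrix (Fin 3) (Fin 3) ℝ, D.IsDiag ∧ (∀ i, D i i ≠ 0) ∧ (D * K * D⁻¹).IsSymm)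
      ↔ K 0 1 * K 1 2 * K 2 0 = K 1 0 * K 0 2 * K 2 1 := by
  rw [exists_diagonal_conj_isSymm_iff]
  constructor
  · rintro ⟨v, hv, hbal⟩
    exact cycle_eq_of_balanced (fun i => pow_ne_zero 2 (hv i)) hbal 0 1 2
  · intro h
    have hw : ∀ i, 0 < K 0 i / K i 0 := fun i => div_pos (hK 0 i) (hK i 0)
    refine ⟨fun i => √(K 0 i / K i 0), fun i => (Real.sqrt_pos.2 (hw i)).ne', fun i j => ?_⟩
    simp only [Real.sq_sqrt (hw _).le]
    exact balanced_of_cycle_eq 0 (fun i => (hK i 0).ne') (fin_three_cycle_eq h) i j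
end

section
/- Let G be a 3×3 real matrix with all entries strictly positive. If G is an inverse M-matrix (i.e., G is invertible, all entries of G are nonnegative, and all off-diagonal entries of G⁻¹ are nonpositive), then G(i,j) G(k,k) ≥ G(i,k) G(k,j) for all indices i, j, k. -/
set_option maxHeartbeats 1000000


/-- For a `3 × 3` inverse `M`-matrix `G` with strictly positive entries,
`G(i,j) G(k,k) ≥ G(i,k) G(k,j)` for all indices `i, j, k`. -/
theorem stmt_5 (G : Matrix (Fin 3) (Fin 3) ℝ) (hpos : ∀ i j, 0 < G i j)
    (hinv : IsUnit G.det)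
    (hM : ∀ i j, i ≠ j → G⁻¹ i j ≤ 0) :
    ∀ i j k, G i k * G k j ≤ G i j * G k k := by
  have hdet0 : G.det ≠ 0 := hinv.ne_zero
  have hA : ∀ i j, G.adjugate i j = G.det * G⁻¹ i j := by
    intro i j
    have h : G⁻¹ i j = G.det⁻¹ * G.adjugate i j := by
      rw [Matrix.inv_def, Ring.inverse_eq_inv', Matrix.smul_apply, smul_eq_mul]
    rw [h]
    field_simp
  have hadj := Matrix.adjugate_fin_three G
  -- explicit adjugate entries
  have a00 : G.adjugate 0 0 = G 1 1 * G 2 2 - G 1 2 * G 2 1 := by rw [hadj]; simp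
  have a01 : G.adjugate 0 1 = -(G 0 1 * G 2 2) + G 0 2 * G 2 1 := by rw [hadj]; simp
  have a02 : G.adjugate 0 2 = G 0 1 * G 1 2 - G 0 2 * G 1 1 := by rw [hadj]; simp
  have a10 : G.adjugate 1 0 = -(G 1 0 * G 2 2) + G 1 2 * G 2 0 := by rw [hadj]; simp
  have a11 : G.adjugate 1 1 = G 0 0 * G 2 2 - G 0 2 * G 2 0 := by rw [hadj]; simp
  have a12 : G.adjugate 1 2 = -(G 0 0 * G 1 2) + G 0 2 * G 1 0 := by rw [hadj]; simp
  have a20 : G.adjugate 2 0 = G 1 0 * G 2 1 - G 1 1 * G 2 0 := by rw [hadj]; simp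
  have a21 : G.adjugate 2 1 = -(G 0 0 * G 2 1) + G 0 1 * G 2 0 := by rw [hadj]; simp
  have a22 : G.adjugate 2 2 = G 0 0 * G 1 1 - G 0 1 * G 1 0 := by rw [hadj]; simp
  -- diagonal of G⁻¹ is positive
  have hGinv : G * G⁻¹ = 1 := Matrix.mul_nonsing_inv G hinv
  have mulnn : ∀ x y : ℝ, x ≤ 0 → y ≤ 0 → 0 ≤ x * y := by
    intro x y hx hy
    have := mul_nonneg (neg_nonneg.mpr hx) (neg_nonneg.mpr hy)
    rwa [neg_mul_neg] at this
  have h1 : ∀ i : Fin 3, G i 0 * G⁻¹ 0 i + G i 1 * G⁻¹ 1 i + G i 2 * G⁻¹ 2 i = 1 := by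
    intro i
    have := congrFun (congrFun hGinv i) i
    simpa [Matrix.mul_apply, Fin.sum_univ_three, Matrix.one_apply] using this
  have hdiag0 : 0 < G⁻¹ 0 0 := by
    nlinarith [h1 0, hpos 0 0,
      mul_nonpos_of_nonneg_of_nonpos (hpos 0 1).le (hM 1 0 (by decide)),
      mul_nonpos_of_nonneg_of_nonpos (hpos 0 2).le (hM 2 0 (by decide))]
  have hdiag1 : 0 < G⁻¹ 1 1 := by
    nlinarith [h1 1, hpos 1 1,
      mul_nonpos_of_nonneg_of_nonpos (hpos 1 0).le (hM 0 1 (by decide)),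
      mul_nonpos_of_nonneg_of_nonpos (hpos 1 2).le (hM 2 1 (by decide))]
  have hdiag2 : 0 < G⁻¹ 2 2 := by
    nlinarith [h1 2, hpos 2 2,
      mul_nonpos_of_nonneg_of_nonpos (hpos 2 0).le (hM 0 2 (by decide)),
      mul_nonpos_of_nonneg_of_nonpos (hpos 2 1).le (hM 1 2 (by decide))]
  -- det G > 0
  have hd : 0 < G.det := by
    rcases hdet0.lt_or_gt with hneg | hposd
    · exfalso
      -- in this case off-diagonal adjugate entries are ≥ 0
      have E10 : (0:ℝ) ≤ -(G 1 0 * G 2 2) + G 1 2 * G 2 0 := by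
        rw [← a10, hA 1 0]; exact mulnn _ _ hneg.le (hM 1 0 (by decide))
      have E02 : (0:ℝ) ≤ G 0 1 * G 1 2 - G 0 2 * G 1 1 := by
        rw [← a02, hA 0 2]; exact mulnn _ _ hneg.le (hM 0 2 (by decide))
      have E12 : (0:ℝ) ≤ -(G 0 0 * G 1 2) + G 0 2 * G 1 0 := by
        rw [← a12, hA 1 2]; exact mulnn _ _ hneg.le (hM 1 2 (by decide))
      have E20 : (0:ℝ) ≤ G 1 0 * G 2 1 - G 1 1 * G 2 0 := by
        rw [← a20, hA 2 0]; exact mulnn _ _ hneg.le (hM 2 0 (by decide))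
      have hps : (0:ℝ) ≤ G 0 1 * (G 1 2 * G 2 0 - G 1 0 * G 2 2) :=
        mul_nonneg (hpos 0 1).le (by linarith)
      have hpt : (0:ℝ) ≤ G 2 0 * (G 0 1 * G 1 2 - G 0 2 * G 1 1) :=
        mul_nonneg (hpos 2 0).le (by linarith)
      have hqr : (0:ℝ) ≤ G 2 1 * (G 0 2 * G 1 0 - G 0 0 * G 1 2) :=
        mul_nonneg (hpos 2 1).le (by linarith)
      have hqt : (0:ℝ) ≤ G 0 2 * (G 1 0 * G 2 1 - G 1 1 * G 2 0) :=
        mul_nonneg (hpos 0 2).le (by linarith)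
      have hp : (0:ℝ) < G 0 1 * G 1 2 * G 2 0 :=
        mul_pos (mul_pos (hpos 0 1) (hpos 1 2)) (hpos 2 0)
      have hq : (0:ℝ) < G 0 2 * G 1 0 * G 2 1 :=
        mul_pos (mul_pos (hpos 0 2) (hpos 1 0)) (hpos 2 1)
      have ht : (0:ℝ) < G 0 2 * G 1 1 * G 2 0 :=
        mul_pos (mul_pos (hpos 0 2) (hpos 1 1)) (hpos 2 0)
      have hint1 : (0:ℝ) ≤ (G 0 2 * G 1 0 * G 2 1) *
          (G 0 1 * (G 1 2 * G 2 0 - G 1 0 * G 2 2)) *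
          (G 2 0 * (G 0 1 * G 1 2 - G 0 2 * G 1 1)) :=
        mul_nonneg (mul_nonneg hq.le hps) hpt
      have hint2 : (0:ℝ) ≤ (G 2 1 * (G 0 2 * G 1 0 - G 0 0 * G 1 2)) *
          (G 0 1 * G 1 2 * G 2 0) *
          (G 0 2 * (G 1 0 * G 2 1 - G 1 1 * G 2 0)) :=
        mul_nonneg (mul_nonneg hqr hp.le) hqt
      have hint3 : (0:ℝ) ≤ (G 2 1 * (G 0 2 * G 1 0 - G 0 0 * G 1 2)) *
          (G 0 2 * G 1 1 * G 2 0) *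
          (G 0 1 * (G 1 2 * G 2 0 - G 1 0 * G 2 2)) :=
        mul_nonneg (mul_nonneg hqr ht.le) hps
      have key : (0:ℝ) ≤ (G 0 1 * G 1 2 * G 2 0) * (G 0 2 * G 1 0 * G 2 1) * G.det := by
        have iden : (G 0 1 * G 1 2 * G 2 0) * (G 0 2 * G 1 0 * G 2 1) * G.det =
            (G 0 2 * G 1 0 * G 2 1) *
              (G 0 1 * (G 1 2 * G 2 0 - G 1 0 * G 2 2)) *
              (G 2 0 * (G 0 1 * G 1 2 - G 0 2 * G 1 1)) +
            (G 2 1 * (G 0 2 * G 1 0 - G 0 0 * G 1 2)) *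
              (G 0 1 * G 1 2 * G 2 0) *
              (G 0 2 * (G 1 0 * G 2 1 - G 1 1 * G 2 0)) +
            (G 2 1 * (G 0 2 * G 1 0 - G 0 0 * G 1 2)) *
              (G 0 2 * G 1 1 * G 2 0) *
              (G 0 1 * (G 1 2 * G 2 0 - G 1 0 * G 2 2)) := by
          rw [Matrix.det_fin_three]; ring
        rw [iden]
        linarith [hint1, hint2, hint3]
      nlinarith [key, mul_pos hp hq, hneg]
    · exact hposd
  -- now adjugate sign facts give the result
  have B01 : G 0 2 * G 2 1 ≤ G 0 1 * G 2 2 := by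
    have := hA 0 1; rw [a01] at this
    nlinarith [mul_nonpos_of_nonneg_of_nonpos hd.le (hM 0 1 (by decide))]
  have B02 : G 0 1 * G 1 2 ≤ G 0 2 * G 1 1 := by
    have := hA 0 2; rw [a02] at this
    nlinarith [mul_nonpos_of_nonneg_of_nonpos hd.le (hM 0 2 (by decide))]
  have B10 : G 1 2 * G 2 0 ≤ G 1 0 * G 2 2 := by
    have := hA 1 0; rw [a10] at this
    nlinarith [mul_nonpos_of_nonneg_of_nonpos hd.le (hM 1 0 (by decide))]
  have B12 : G 0 2 * G 1 0 ≤ G 0 0 * G 1 2 := by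
    have := hA 1 2; rw [a12] at this
    nlinarith [mul_nonpos_of_nonneg_of_nonpos hd.le (hM 1 2 (by decide))]
  have B20 : G 1 0 * G 2 1 ≤ G 1 1 * G 2 0 := by
    have := hA 2 0; rw [a20] at this
    nlinarith [mul_nonpos_of_nonneg_of_nonpos hd.le (hM 2 0 (by decide))]
  have B21 : G 0 1 * G 2 0 ≤ G 0 0 * G 2 1 := by
    have := hA 2 1; rw [a21] at this
    nlinarith [mul_nonpos_of_nonneg_of_nonpos hd.le (hM 2 1 (by decide))]
  have P0 : G 1 2 * G 2 1 ≤ G 1 1 * G 2 2 := by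
    have := hA 0 0; rw [a00] at this
    nlinarith [mul_pos hd hdiag0]
  have P1 : G 0 2 * G 2 0 ≤ G 0 0 * G 2 2 := by
    have := hA 1 1; rw [a11] at this
    nlinarith [mul_pos hd hdiag1]
  have P2 : G 0 1 * G 1 0 ≤ G 0 0 * G 1 1 := by
    have := hA 2 2; rw [a22] at this
    nlinarith [mul_pos hd hdiag2]
  have tri : ∀ m : Fin 3, m = 0 ∨ m = 1 ∨ m = 2 := by decide
  intro i j k
  rcases tri i with rfl | rfl | rfl <;> rcases tri j with rfl | rfl | rfl <;>
    rcases tri k with rfl | rfl | rfl <;>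
    linarith [B01, B02, B10, B12, B20, B21, P0, P1, P2]
end

section
/- Let G : Fin n → Fin n → ℝ be a matrix with no zero entries such that G(i,j) G(j,k) G(k,i) > 0 for all i, j, k. Then there exists a function S : Fin n → {-1, +1} such that S(i) G(i,j) S(j) > 0 for all i, j. -/
/-- If all entries of `G` are nonzero and `G(i,j)G(j,k)G(k,i) > 0` for all
`i, j, k`, then there is a signature `S` with `S(i) G(i,j) S(j) > 0` for all `i, j`. -/
theorem stmt_6 {n : ℕ} (G : Matrix (Fin n) (Fin n) ℝ)
    (hne : ∀ i j, G i j ≠ 0)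
    (htri : ∀ i j k, 0 < G i j * G j k * G k i) :
    ∃ S : Fin n → ℝ, (∀ i, S i = 1 ∨ S i = -1) ∧ ∀ i j, 0 < S i * G i j * S j := by
  cases n with
  | zero => exact ⟨fun i => i.elim0, fun i => i.elim0, fun i => i.elim0⟩
  | succ m =>
    refine ⟨fun i => if 0 < G 0 i then 1 else -1, fun i => by dsimp; split <;> simp, ?_⟩
    intro i j
    have hsym : 0 < G j 0 * G 0 j := by
      have h := htri j 0 0
      have hdiag : 0 < G 0 0 := by
        have := htri 0 0 0
        nlinarith [sq_nonneg (G 0 0)]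
      nlinarith
    have h1 := htri 0 i j
    have key : 0 < G 0 i * G i j * G 0 j := by
      have hsq : 0 < G j 0 * G j 0 := mul_self_pos.2 (hne j 0)
      nlinarith [mul_pos h1 hsym, hsq]
    dsimp
    split <;> split <;> rename_i hi hj
    · nlinarith [mul_pos hi hj]
    · have hj' : G 0 j < 0 := (hne 0 j).lt_or_gt.resolve_right hj
      nlinarith [mul_pos hi (neg_pos.2 hj')]
    · have hi' : G 0 i < 0 := (hne 0 i).lt_or_gt.resolve_right hi
      nlinarith [mul_pos (neg_pos.2 hi') hj]
    · have hi' : G 0 i < 0 := (hne 0 i).lt_or_gt.resolve_right hi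
      have hj' : G 0 j < 0 := (hne 0 j).lt_or_gt.resolve_right hj
      nlinarith [mul_pos_of_neg_of_neg hi' hj']
end

section
/- If two invertible n×n real matrices A and B are effectively equivalent (det(I + xA) = det(I + xB) for all diagonal x), then A⁻¹ and B⁻¹ are effectively equivalent. -/
/-!
For invertible diagonal `x`, `det (x + A) = det x * det (1 + x⁻¹ A)`, so the hypothesis gives
`det (x + A) = det (x + B)`. Shifting `x` by `t • 1` makes both sides polynomials in `t` that agree
for all but finitely many `t`, so this holds for every diagonal `x`; at `x = 0` it gives
`det A = det B`. Finally `1 + x A⁻¹ = (x + A) A⁻¹`.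
-/

open Matrix Polynomial

namespace Matrix

variable {ι K : Type*} [Fintype ι] [DecidableEq ι] [Field K]

lemma det_diagonal_add_eq_of_forall_ne_zero {A B : Matrix ι ι K}
    (heq : ∀ d : ι → K, (1 + diagonal d * A).det = (1 + diagonal d * B).det)
    {d : ι → K} (hd : ∀ i, d i ≠ 0) :
    (diagonal d + A).det = (diagonal d + B).det := by
  have factor : ∀ M : Matrix ι ι K, diagonal d + M = diagonal d * (1 + diagonal d⁻¹ * M) := by
    intro M
    have hcancel : (fun i => d i * d⁻¹ i) = fun _ => 1 := funext fun i => mul_inv_cancel₀ (hd i)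
    rw [Matrix.mul_add, mul_one, ← Matrix.mul_assoc, diagonal_mul_diagonal, hcancel, diagonal_one,
      one_mul]
  rw [factor, factor, det_mul, det_mul, heq]

lemma det_diagonal_add_eq [Infinite K] {A B : Matrix ι ι K}
    (heq : ∀ d : ι → K, (1 + diagonal d * A).det = (1 + diagonal d * B).det) (d : ι → K) :
    (diagonal d + A).det = (diagonal d + B).det := by
  have eval_shift : ∀ (M : Matrix ι ι K) (t : K),
      (-(diagonal d + M)).charpoly.eval t = (diagonal (fun i => t + d i) + M).det := by
    intro M t
    rw [eval_charpoly, sub_neg_eq_add, ← add_assoc, scalar_apply, diagonal_add]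
  have hcofinite : {t : K | ∀ i, t + d i ≠ 0}.Infinite := by
    refine ((Set.finite_range (fun i => -d i)).infinite_compl).mono ?_
    intro t ht i hti
    exact ht ⟨i, (eq_neg_of_add_eq_zero_left hti).symm⟩
  have hpoly : (-(diagonal d + A)).charpoly = (-(diagonal d + B)).charpoly :=
    eq_of_infinite_eval_eq _ _ <| hcofinite.mono fun t ht => by
      simp only [Set.mem_ofPred_eq, eval_shift]
      exact det_diagonal_add_eq_of_forall_ne_zero heq ht
  have h0 := congrArg (eval 0) hpoly
  simpa only [eval_shift, zero_add] using h0

lemma det_one_add_mul_inv {A : Matrix ι ι K} (hA : IsUnit A.det) (X : Matrix ι ι K) :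
    (1 + X * A⁻¹).det = (X + A).det * (A.det)⁻¹ := by
  rw [← mul_nonsing_inv A hA, ← add_mul, add_comm, det_mul, det_nonsing_inv, Ring.inverse_eq_inv']

end Matrix

/-- Effective equivalence of invertible matrices passes to their inverses. -/
theorem stmt_10 {n : ℕ} (A B : Matrix (Fin n) (Fin n) ℝ)
    (hA : IsUnit A.det) (hB : IsUnit B.det)
    (heq : ∀ x : Matrix (Fin n) (Fin n) ℝ, x.IsDiag →
      (1 + x * A).det = (1 + x * B).det) :
    ∀ x : Matrix (Fin n) (Fin n) ℝ, x.IsDiag →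
      (1 + x * A⁻¹).det = (1 + x * B⁻¹).det := by
  intro x hx
  have hshift : ∀ d, (diagonal d + A).det = (diagonal d + B).det :=
    det_diagonal_add_eq fun d => heq _ (isDiag_diagonal d)
  have hdet : A.det = B.det := by simpa using hshift 0
  rw [det_one_add_mul_inv hA, det_one_add_mul_inv hB, ← hx.diagonal_diag, hshift, hdet]
end

section
/- If A and B are n×n real matrices that are effectively equivalent, then A(i,j)A(j,i) = B(i,j)B(j,i) for all i ≠ j, and A(i,i) = B(i,i) for all i. -/
/-- Effectively equivalent matrices have the same diagonal entries and the same
symmetrized products of off-diagonal entries. -/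
theorem stmt_11 {n : ℕ} (A B : Matrix (Fin n) (Fin n) ℝ)
    (heq : ∀ x : Matrix (Fin n) (Fin n) ℝ, x.IsDiag →
      (1 + x * A).det = (1 + x * B).det) :
    (∀ i j, i ≠ j → A i j * A j i = B i j * B j i) ∧ (∀ i, A i i = B i i) := by
  have hdiag : ∀ i, A i i = B i i := by
    intro i
    set C : Matrix (Fin n) (Fin 1) ℝ := Matrix.of fun a _ => (Pi.single i 1 : Fin n → ℝ) a with hC
    set D : Matrix (Fin 1) (Fin n) ℝ := Matrix.of fun _ b => (Pi.single i 1 : Fin n → ℝ) b with hD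
    have hx : Matrix.diagonal (Pi.single i (1:ℝ)) = C * D := by
      ext a b
      by_cases ha : a = i <;> by_cases hb : b = i <;>
        simp [hC, hD, Matrix.mul_apply, Matrix.diagonal_apply, Pi.single_apply, ha, hb] <;> omega
    have key : ∀ M : Matrix (Fin n) (Fin n) ℝ, (D * M * C) 0 0 = M i i := by
      intro M
      simp [hC, hD, Matrix.mul_apply, Pi.single_apply, ite_mul, mul_ite]
    have h1 := heq (Matrix.diagonal (Pi.single i (1:ℝ))) (Matrix.isDiag_diagonal _)
    rw [hx, Matrix.mul_assoc, Matrix.mul_assoc, Matrix.det_one_add_mul_comm,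
      Matrix.det_one_add_mul_comm C] at h1
    rw [Matrix.det_fin_one, Matrix.det_fin_one] at h1
    simp only [Matrix.add_apply, Matrix.one_apply_eq] at h1
    rw [key A, key B] at h1
    linarith
  refine ⟨?_, hdiag⟩
  intro i j hij
  set C : Matrix (Fin n) (Fin 2) ℝ :=
    Matrix.of fun a k => if k = 0 then (Pi.single i 1 : Fin n → ℝ) a else (Pi.single j 1 : Fin n → ℝ) a with hC
  set D : Matrix (Fin 2) (Fin n) ℝ :=
    Matrix.of fun k b => if k = 0 then (Pi.single i 1 : Fin n → ℝ) b else (Pi.single j 1 : Fin n → ℝ) b with hD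
  have hx : Matrix.diagonal (Pi.single i (1:ℝ) + Pi.single j (1:ℝ)) = C * D := by
    ext a b
    rw [Matrix.mul_apply, Fin.sum_univ_two]
    by_cases ha : a = i <;> by_cases hb : b = i <;> by_cases ha' : a = j <;> by_cases hb' : b = j <;>
      simp_all [hC, hD, Matrix.diagonal_apply, Pi.single_apply] <;> omega
  have key : ∀ M : Matrix (Fin n) (Fin n) ℝ,
      D * M * C = !![M i i, M i j; M j i, M j j] := by
    intro M
    ext k l
    fin_cases k <;> fin_cases l <;>
      simp [hC, hD, Matrix.mul_apply, Pi.single_apply, ite_mul, mul_ite]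
  have h1 := heq (Matrix.diagonal (Pi.single i (1:ℝ) + Pi.single j (1:ℝ)))
    (Matrix.isDiag_diagonal _)
  rw [hx, Matrix.mul_assoc, Matrix.mul_assoc, Matrix.det_one_add_mul_comm,
    Matrix.det_one_add_mul_comm C, key A, key B] at h1
  simp [Matrix.det_fin_two, Matrix.one_apply] at h1
  have h2 := hdiag i
  have h3 := hdiag j
  rw [h2, h3] at h1
  linarith
end

section
/- If A is an n×n real matrix that is effectively equivalent to a symmetric matrix, and c is a real number such that A + cI is invertible, then A + cI is effectively equivalent to a symmetric matrix. -/
open Matrix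

lemma key_factor {n : ℕ} (M : Matrix (Fin n) (Fin n) ℝ) (c : ℝ) (e : Fin n → ℝ)
    (h : ∀ i, 1 + c * e i ≠ 0) :
    (1 + Matrix.diagonal e * (M + c • (1 : Matrix (Fin n) (Fin n) ℝ))).det =
      (Matrix.diagonal (fun i => 1 + c * e i)).det *
        (1 + Matrix.diagonal (fun i => e i / (1 + c * e i)) * M).det := by
  rw [← Matrix.det_mul]
  have h1 : Matrix.diagonal (fun i => 1 + c * e i) *
      Matrix.diagonal (fun i => e i / (1 + c * e i)) = Matrix.diagonal e := by
    have he : (fun i => (1 + c * e i) * (e i / (1 + c * e i))) = e := by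
      funext i
      rw [mul_comm]
      exact div_mul_cancel₀ _ (h i)
    rw [Matrix.diagonal_mul_diagonal, he]
  have h2 : Matrix.diagonal (fun i => 1 + c * e i)
      = 1 + c • Matrix.diagonal e := by
    ext i j
    by_cases hij : i = j <;>
      simp [Matrix.diagonal, Matrix.one_apply, hij]
  have hr : Matrix.diagonal (fun i => 1 + c * e i) *
      (1 + Matrix.diagonal (fun i => e i / (1 + c * e i)) * M) =
      1 + Matrix.diagonal e * (M + c • (1 : Matrix (Fin n) (Fin n) ℝ)) := by
    rw [mul_add, mul_one, ← mul_assoc, h1, h2, mul_add, Matrix.mul_smul, mul_one]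
    abel
  rw [hr]

/-- If `A` is effectively equivalent to a symmetric matrix and `A + cI` is
invertible, then `A + cI` is effectively equivalent to a symmetric matrix. -/
theorem stmt_12 {n : ℕ} (A : Matrix (Fin n) (Fin n) ℝ)
    (hsym : ∃ S : Matrix (Fin n) (Fin n) ℝ, S.IsSymm ∧
      ∀ x : Matrix (Fin n) (Fin n) ℝ, x.IsDiag → (1 + x * A).det = (1 + x * S).det)
    (c : ℝ) (hc : IsUnit (A + c • (1 : Matrix (Fin n) (Fin n) ℝ)).det) :
    ∃ S : Matrix (Fin n) (Fin n) ℝ, S.IsSymm ∧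
      ∀ x : Matrix (Fin n) (Fin n) ℝ, x.IsDiag →
        (1 + x * (A + c • (1 : Matrix (Fin n) (Fin n) ℝ))).det = (1 + x * S).det := by
  obtain ⟨S, hS, hdet⟩ := hsym
  refine ⟨S + c • 1, ?_, ?_⟩
  · unfold Matrix.IsSymm
    rw [Matrix.transpose_add, hS, Matrix.transpose_smul, Matrix.transpose_one]
  · intro x hx
    have hxd : x = Matrix.diagonal x.diag := hx.diagonal_diag.symm
    set d : Fin n → ℝ := x.diag with hd
    set f : ℝ → ℝ := fun t =>
      (1 + (t • Matrix.diagonal d) * (A + c • (1 : Matrix (Fin n) (Fin n) ℝ))).det with hf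
    set g : ℝ → ℝ := fun t =>
      (1 + (t • Matrix.diagonal d) * (S + c • (1 : Matrix (Fin n) (Fin n) ℝ))).det with hg
    have hsmul : ∀ t : ℝ, t • Matrix.diagonal d = Matrix.diagonal (fun i => t * d i) := by
      intro t
      rw [← Matrix.diagonal_smul]
      rfl
    have hcf : Continuous f := by
      apply Continuous.matrix_det
      exact continuous_const.add ((continuous_id.smul continuous_const).matrix_mul
        continuous_const)
    have hcg : Continuous g := by
      apply Continuous.matrix_det
      exact continuous_const.add ((continuous_id.smul continuous_const).matrix_mul
        continuous_const)
    set s : Set ℝ := {t | ∀ i, 1 + c * (t * d i) ≠ 0} with hs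
    have hdense : Dense s := by
      have hsub : sᶜ ⊆ ⋃ i : Fin n, {t : ℝ | 1 + c * (t * d i) = 0} := by
        intro t ht
        simp only [hs, Set.mem_compl_iff, Set.mem_setOf_eq, not_forall, not_not] at ht
        obtain ⟨i, hi⟩ := ht
        exact Set.mem_iUnion.2 ⟨i, hi⟩
      have hfin : (⋃ i : Fin n, {t : ℝ | 1 + c * (t * d i) = 0}).Finite := by
        apply Set.finite_iUnion
        intro i
        apply Set.Subsingleton.finite
        intro t₁ h₁ t₂ h₂
        simp only [Set.mem_setOf_eq] at h₁ h₂
        have hne : c * d i ≠ 0 := by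
          intro h0
          rw [mul_comm c (t₁ * d i), mul_assoc, mul_comm (d i) c, h0, mul_zero] at h₁
          norm_num at h₁
        have e1 : t₁ * (c * d i) = t₂ * (c * d i) := by nlinarith [h₁, h₂]
        exact mul_right_cancel₀ hne e1
      have : Dense sᶜᶜ :=
        Set.Countable.dense_compl ℝ ((hfin.subset hsub).countable)
      rwa [compl_compl] at this
    have heq : Set.EqOn f g s := by
      intro t ht
      simp only [hs, Set.mem_setOf_eq] at ht
      simp only [hf, hg, hsmul t]
      rw [key_factor A c (fun i => t * d i) ht, key_factor S c (fun i => t * d i) ht]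
      congr 1
      exact hdet _ (Matrix.isDiag_diagonal _)
    have hfg : f = g := hcf.ext_on hdense hcg heq
    have h1 : f 1 = g 1 := by rw [hfg]
    simp only [hf, hg, one_smul] at h1
    rw [hxd]
    exact h1
end

section
/- Let G be an n×n real matrix with all entries strictly positive, fix an index p, and let σ > 0 with 1 + σ G(p,p) > 0. Define H(σ,G,p)(i,j) = G(i,j) − (σ/(1+σG(p,p))) G(i,p) G(p,j) for i,j ≠ p. Then det(I + λ H(σ,G,p)) · (1 + σ G(p,p)) = det(I + (λ ⊕ σ) G) for every diagonal λ on the indices ≠ p, where λ ⊕ σ denotes the diagonal matrix with entries λ off p and σ at p. -/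
/-- Conditioning identity: for `H(σ,G,p)(i,j) = G(i,j) − (σ/(1+σG(p,p))) G(i,p) G(p,j)`
on the indices `≠ p`, one has
`det(I + diag(λ) H(σ,G,p)) ⬝ (1 + σ G(p,p)) = det(I + diag(λ ⊕ σ) G)`. -/
theorem stmt_18 {n : ℕ} (G : Matrix (Fin n) (Fin n) ℝ) (hpos : ∀ i j, 0 < G i j)
    (p : Fin n) (σ : ℝ) (hσ : 0 < σ) (hden : 0 < 1 + σ * G p p)
    (lam : {i : Fin n // i ≠ p} → ℝ) :
    (1 + Matrix.diagonal lam
        * (Matrix.of fun i j : {i : Fin n // i ≠ p} =>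
            G i.1 j.1 - (σ / (1 + σ * G p p)) * G i.1 p * G p j.1)).det
      * (1 + σ * G p p)
    = (1 + Matrix.diagonal (fun i : Fin n =>
          if h : i = p then σ else lam ⟨i, h⟩) * G).det := by
  set d : ℝ := 1 + σ * G p p with hd
  have hd0 : d ≠ 0 := ne_of_gt hden
  set M : Matrix (Fin n) (Fin n) ℝ :=
    1 + Matrix.diagonal (fun i : Fin n => if h : i = p then σ else lam ⟨i, h⟩) * G with hM
  let e : Unit ⊕ {i : Fin n // i ≠ p} ≃ Fin n :=
    { toFun := Sum.elim (fun _ => p) Subtype.val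
      invFun := fun i => if h : i = p then Sum.inl () else Sum.inr ⟨i, h⟩
      left_inv := by rintro (⟨⟩ | ⟨i, hi⟩) <;> simp_all
      right_inv := by intro i; by_cases h : i = p <;> simp [h] }
  set A : Matrix Unit Unit ℝ := Matrix.of fun _ _ => d with hA
  set A' : Matrix Unit Unit ℝ := Matrix.of fun _ _ => d⁻¹ with hA'
  set B : Matrix Unit {i : Fin n // i ≠ p} ℝ := Matrix.of fun _ j => σ * G p j.1 with hB
  set C : Matrix {i : Fin n // i ≠ p} Unit ℝ := Matrix.of fun i _ => lam i * G i.1 p with hC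
  set D : Matrix {i : Fin n // i ≠ p} {i : Fin n // i ≠ p} ℝ :=
    Matrix.of fun i j => (if i = j then (1 : ℝ) else 0) + lam i * G i.1 j.1 with hD
  have hAA' : A * A' = 1 := by
    ext i j
    simp [hA, hA', Matrix.mul_apply, Matrix.one_apply, mul_inv_cancel₀ hd0]
  have hA'A : A' * A = 1 := by
    ext i j
    simp [hA, hA', Matrix.mul_apply, Matrix.one_apply, inv_mul_cancel₀ hd0]
  letI : Invertible A := ⟨A', hA'A, hAA'⟩
  have hsub : M.submatrix e e = Matrix.fromBlocks A B C D := by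
    ext i j
    rcases i with _ | ⟨i, hi⟩ <;> rcases j with _ | ⟨j, hj⟩
    · simp [hM, hA, e, Matrix.add_apply, Matrix.one_apply, Matrix.diagonal_mul, hd]
    · simp [hM, hB, e, Matrix.add_apply, Matrix.one_apply, Matrix.diagonal_mul,
        Ne.symm hj]
    · simp [hM, hC, e, Matrix.add_apply, Matrix.one_apply, Matrix.diagonal_mul, hi]
    · simp [hM, hD, e, Matrix.add_apply, Matrix.one_apply, Matrix.diagonal_mul, hi,
        Subtype.ext_iff]
  have hdetM : M.det = d * Matrix.det (D - C * ⅟ A * B) := by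
    rw [← Matrix.det_submatrix_equiv_self e M, hsub, Matrix.det_fromBlocks₁₁]
    congr 1
    simp [hA, Matrix.det_unique]
  have hinv : (⅟ A : Matrix Unit Unit ℝ) = A' := rfl
  have hCAB : C * ⅟ A * B
      = Matrix.of fun i j : {i : Fin n // i ≠ p} =>
          lam i * G i.1 p * d⁻¹ * (σ * G p j.1) := by
    rw [hinv]
    ext i j
    simp [hC, hA', hB, Matrix.mul_apply]
  have hSchur : D - C * ⅟ A * B
      = 1 + Matrix.diagonal lam
        * (Matrix.of fun i j : {i : Fin n // i ≠ p} =>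
            G i.1 j.1 - (σ / (1 + σ * G p p)) * G i.1 p * G p j.1) := by
    rw [hCAB]
    ext i j
    simp only [hD, Matrix.sub_apply, Matrix.of_apply, Matrix.add_apply, Matrix.one_apply,
      Matrix.diagonal_mul, ← hd]
    by_cases hij : i = j <;> field_simp [hij] <;> ring
  rw [hdetM, hSchur, mul_comm]
end
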